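/- Let f : ℝ → ℝ be twice continuously differentiable and let x̄ be a fixed point of f (f(x̄) = x̄). If f′(x̄) = 1 and f″(x̄) < 0, then x̄ is asymptotically semistable from the right: there exists δ > 0 such that for every x₀ with x̄ ≤ x₀ < x̄ + δ, the sequence of iterates f^[n](x₀) converges to x̄ as n → ∞. -/

import Mathlib

open Filter Set Topology

/-!
Since `f' = 1` and `f'' < 0` at `x̄`, on a small interval `(x̄, x̄ + δ)` we have `0 < f' < 1`,
so by the mean value theorem `x̄ < f x < x` there. The orbit of a point of `[x̄, x̄ + δ)` is thus
decreasing and bounded below by `x̄`; its limit is a fixed point of `f`, and the only one in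
`[x̄, x̄ + δ)` is `x̄`.
-/

lemma eventually_nhdsGT_lt_of_deriv_neg {g : ℝ → ℝ} {a : ℝ} (h : deriv g a < 0) :
    ∀ᶠ x in 𝓝[>] a, g x < g a := by
  have hslope := (differentiableAt_of_deriv_ne_zero h.ne).hasDerivAt.tendsto_slope.mono_left
    (nhdsGT_le_nhdsNE a)
  filter_upwards [hslope.eventually (eventually_lt_nhds h), self_mem_nhdsWithin] with x hx hax
  exact (slope_neg_iff_of_le (le_of_lt hax)).1 hx

lemma eventually_nhdsGT_deriv_mem_Ioo {f : ℝ → ℝ} {a : ℝ} (hd1 : deriv f a = 1)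
    (hd2 : deriv (deriv f) a < 0) : ∀ᶠ x in 𝓝[>] a, deriv f x ∈ Ioo 0 1 := by
  have hcont : ContinuousAt (deriv f) a :=
    (differentiableAt_of_deriv_ne_zero hd2.ne).continuousAt
  have hpos : ∀ᶠ x in 𝓝 a, 0 < deriv f x := hcont.eventually (lt_mem_nhds (by simp [hd1]))
  filter_upwards [nhdsWithin_le_nhds hpos, eventually_nhdsGT_lt_of_deriv_neg hd2] with x hx hx'
  exact ⟨hx, hd1 ▸ hx'⟩

lemma sub_mem_Ioo_of_deriv_mem_Ioo {f : ℝ → ℝ} {a x : ℝ} (hax : a < x)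
    (hf : ContinuousOn f (Icc a x)) (hderiv : ∀ c ∈ Ioo a x, deriv f c ∈ Ioo 0 1) :
    f x - f a ∈ Ioo 0 (x - a) := by
  have hdiff : DifferentiableOn ℝ f (Ioo a x) := fun c hc =>
    (differentiableAt_of_deriv_ne_zero (hderiv c hc).1.ne').differentiableWithinAt
  obtain ⟨c, hc, hslope⟩ := exists_deriv_eq_slope f hax hf hdiff
  have hxa : 0 < x - a := sub_pos.2 hax
  obtain ⟨hpos, hlt⟩ := hslope ▸ hderiv c hc
  exact ⟨(div_pos_iff_of_pos_right hxa).1 hpos, (div_lt_one hxa).1 hlt⟩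

lemma tendsto_iterate_of_mapsTo_Ioo {α : Type*} [ConditionallyCompleteLinearOrder α]
    [TopologicalSpace α] [OrderTopology α] {f : α → α} {a b x₀ : α} (hfix : f a = a)
    (hf : ContinuousOn f (Ioo a b)) (hmaps : ∀ x ∈ Ioo a b, f x ∈ Ioo a x)
    (hx₀ : x₀ ∈ Ico a b) :
    Tendsto (fun n => f^[n] x₀) atTop (𝓝 a) := by
  have hle : ∀ x ∈ Icc a x₀, f x ∈ Icc a x := by
    rintro x ⟨hax, hxx₀⟩
    rcases hax.eq_or_lt with rfl | hax
    · simp [hfix]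
    · exact Ioo_subset_Icc_self (hmaps x ⟨hax, hxx₀.trans_lt hx₀.2⟩)
  have hinv : MapsTo f (Icc a x₀) (Icc a x₀) := fun x hx =>
    ⟨(hle x hx).1, (hle x hx).2.trans hx.2⟩
  have horbit : ∀ n, f^[n] x₀ ∈ Icc a x₀ := fun n => hinv.iterate n ⟨hx₀.1, le_rfl⟩
  have hanti : Antitone (fun n => f^[n] x₀) := antitone_nat_of_succ_le fun n => by
    rw [Function.iterate_succ_apply']
    exact (hle _ (horbit n)).2
  have hbdd : BddBelow (range fun n => f^[n] x₀) :=
    ⟨a, by rintro _ ⟨n, rfl⟩; exact (horbit n).1⟩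
  have hlim := tendsto_atTop_ciInf hanti hbdd
  set L := ⨅ n, f^[n] x₀
  have hL : L ∈ Icc a x₀ := isClosed_Icc.mem_of_tendsto hlim (Eventually.of_forall horbit)
  rcases hL.1.eq_or_lt with hLa | haL
  · exact hLa ▸ hlim
  · have hLmem : L ∈ Ioo a b := ⟨haL, hL.2.trans_lt hx₀.2⟩
    have hfixL : f L = L :=
      isFixedPt_of_tendsto_iterate hlim (hf.continuousAt (isOpen_Ioo.mem_nhds hLmem))
    exact absurd hfixL (hmaps L hLmem).2.ne

theorem semistable_from_right (f : ℝ → ℝ) (xbar : ℝ)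
    (hf : ContDiff ℝ 2 f)
    (hfix : f xbar = xbar)
    (hd1 : deriv f xbar = 1)
    (hd2 : iteratedDeriv 2 f xbar < 0) :
    ∃ δ > 0, ∀ x0 : ℝ, xbar ≤ x0 → x0 < xbar + δ →
      Tendsto (fun n : ℕ => f^[n] x0) atTop (nhds xbar) := by
  rw [iteratedDeriv_succ, iteratedDeriv_one] at hd2
  obtain ⟨b, hb, hderiv⟩ :=
    mem_nhdsGT_iff_exists_Ioo_subset.1 (eventually_nhdsGT_deriv_mem_Ioo hd1 hd2)
  have hmaps : ∀ x ∈ Ioo xbar b, f x ∈ Ioo xbar x := fun x hx => by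
    have := sub_mem_Ioo_of_deriv_mem_Ioo hx.1 hf.continuous.continuousOn
      fun c hc => hderiv ⟨hc.1, hc.2.trans hx.2⟩
    rw [hfix] at this
    exact ⟨by linarith [this.1], by linarith [this.2]⟩
  refine ⟨b - xbar, sub_pos.2 hb, fun x0 hx0 hx0b => ?_⟩
  exact tendsto_iterate_of_mapsTo_Ioo hfix hf.continuous.continuousOn hmaps ⟨hx0, by linarith⟩
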